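/- For every κ > 1 and every E > 0, the strict inequality 2·g((κ − 1/2)E + κ − 1) − g(κE + κ − 1) − g((κ−1)(E+1)) < 2·g(E/2) − g(E) holds. -/

import Mathlib

/-! The left-hand side is obtained from the right-hand side, `2g(E/2) - g(E) - g(0)`, by shifting
all three arguments by `(κ - 1)(E + 1)`. The midpoint Jensen gap `2f((b+c)/2) - f(b) - f(c)`
strictly decreases under such a shift as soon as `f'` is strictly midpoint convex, since its
derivative in the shift is minus the midpoint gap of `f'`; and `g'(x) = log (x + 1) - log x` is
strictly midpoint convex. -/

noncomputable def g (x : ℝ) : ℝ := (x + 1) * Real.log (x + 1) - x * Real.log x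

open Real Set

theorem two_mul_midpoint_add_sub_sub_lt {f f' : ℝ → ℝ} (hf : ContinuousOn f (Ici 0))
    (hf' : ∀ x, 0 < x → HasDerivAt f (f' x) x)
    (hmid : ∀ b c, 0 < c → c < b → 2 * f' ((b + c) / 2) < f' b + f' c)
    {b c s : ℝ} (hc : 0 ≤ c) (hcb : c < b) (hs : 0 < s) :
    2 * f ((b + c) / 2 + s) - f (b + s) - f (c + s) < 2 * f ((b + c) / 2) - f b - f c := by
  have hb : 0 ≤ b := hc.trans hcb.le
  set m := (b + c) / 2
  have hm : 0 ≤ m := by positivity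
  have shift_cont : ∀ a, 0 ≤ a → ContinuousOn (fun t => f (a + t)) (Ici 0) := fun a ha =>
    hf.comp (continuousOn_const.add continuousOn_id) fun t (ht : 0 ≤ t) =>
      show 0 ≤ a + t by positivity
  have hcont : ContinuousOn (fun t => 2 * f (m + t) - f (b + t) - f (c + t)) (Ici 0) :=
    ((continuousOn_const.mul (shift_cont m hm)).sub (shift_cont b hb)).sub (shift_cont c hc)
  have hderiv : ∀ t ∈ Ioi (0 : ℝ),
      HasDerivWithinAt (fun t => 2 * f (m + t) - f (b + t) - f (c + t))
        (2 * f' (m + t) - f' (b + t) - f' (c + t)) (Ioi 0) t := by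
    intro t (ht : 0 < t)
    have shift_deriv : ∀ a, 0 ≤ a → HasDerivAt (fun t => f (a + t)) (f' (a + t)) t :=
      fun a ha => (hf' (a + t) (by positivity)).comp_const_add a t
    exact ((((shift_deriv m hm).const_mul 2).sub (shift_deriv b hb)).sub
      (shift_deriv c hc)).hasDerivWithinAt
  have hneg : ∀ t ∈ Ioi (0 : ℝ), 2 * f' (m + t) - f' (b + t) - f' (c + t) < 0 := by
    intro t (ht : 0 < t)
    have h := hmid (b + t) (c + t) (by positivity) (by linarith)
    rw [show (b + t + (c + t)) / 2 = m + t by ring] at h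
    linarith
  rw [← interior_Ici] at hderiv hneg
  simpa using strictAntiOn_of_hasDerivWithinAt_neg (convex_Ici 0) hcont hderiv hneg
    (mem_Ici.2 le_rfl) hs.le hs

theorem two_mul_log_add_one_sub_log_midpoint_lt {b c : ℝ} (hc : 0 < c) (hcb : c < b) :
    2 * (log ((b + c) / 2 + 1) - log ((b + c) / 2)) <
      log (b + 1) - log b + (log (c + 1) - log c) := by
  set m := (b + c) / 2 with hm_def
  have hb : 0 < b := hc.trans hcb
  have hm : 0 < m := by positivity
  have hbc : b * c < m ^ 2 := by nlinarith [sq_pos_of_pos (sub_pos.2 hcb)]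
  have key : (m + 1) ^ 2 * (b * c) < m ^ 2 * ((b + 1) * (c + 1)) := by
    have h : m ^ 2 * ((b + 1) * (c + 1)) - (m + 1) ^ 2 * (b * c) =
        (2 * m + 1) * (m ^ 2 - b * c) := by
      rw [hm_def]; ring
    nlinarith [mul_pos (by positivity : 0 < 2 * m + 1) (sub_pos.2 hbc)]
  have h := log_lt_log (by positivity) key
  rw [log_mul (by positivity) (by positivity), log_mul (by positivity) (by positivity),
    log_mul (by positivity) (by positivity), log_mul (by positivity) (by positivity),
    log_pow, log_pow] at h
  push_cast at h
  linarith

theorem hasDerivAt_g {x : ℝ} (hx : 0 < x) : HasDerivAt g (log (x + 1) - log x) x := by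
  have h := ((hasDerivAt_mul_log (by positivity : x + 1 ≠ 0)).comp_add_const x 1).sub
    (hasDerivAt_mul_log hx.ne')
  exact h.congr_deriv (by ring)

theorem continuous_g : Continuous g :=
  (continuous_mul_log.comp (continuous_add_const 1)).sub continuous_mul_log

theorem g_zero : g 0 = 0 := by simp [g]

/-- for `κ > 1` and `E > 0`,
`2g((κ−1/2)E + κ−1) − g(κE + κ−1) − g((κ−1)(E+1)) < 2g(E/2) − g(E)`. -/
theorem strict_separation (κ E : ℝ) (hκ : 1 < κ) (hE : 0 < E) :
    2 * g ((κ - 1 / 2) * E + κ - 1) - g (κ * E + κ - 1) - g ((κ - 1) * (E + 1)) <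
      2 * g (E / 2) - g E := by
  have h := two_mul_midpoint_add_sub_sub_lt continuous_g.continuousOn (fun _ => hasDerivAt_g)
    (fun _ _ => two_mul_log_add_one_sub_log_midpoint_lt) le_rfl hE
    (mul_pos (sub_pos.2 hκ) (by positivity : 0 < E + 1))
  rw [add_zero, zero_add, g_zero, sub_zero] at h
  convert h using 5 <;> ring
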